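/- Let 0 < γ ≤ α < 1, 1 < q < ∞ and τ ≥ 1. A weight w belongs to A_q^+(γ) if and only if there exists a constant C = C(n,p,q,γ,α,τ) such that (⨍_{S^−(α)} w)·(⨍_{R^+(α)} w^{1/(1−q)})^{q−1} ≤ C for every parabolic rectangle R = R(x,t,L) ⊂ ℝ^{n+1}, where S^−(α) = R^+(α) − (0, τ(1+α)L^p) is the translated lower part of R. In particular, the definition of A_q^+(γ) is independent of the choice of 0 < γ < 1. -/

import Mathlib

open MeasureTheory ENNReal Set

noncomputable section

/-- The closed spatial cube `Q(x,L)` with center `x` and side length `L`. -/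
def spCube (n : ℕ) (x : Fin n → ℝ) (L : ℝ) : Set (Fin n → ℝ) :=
  {y | ∀ i, |y i - x i| ≤ L}

/-- The parabolic rectangle `R(x,t,L) = Q(x,L) × (t - L^p, t + L^p)`. -/
def pRect (n : ℕ) (p : ℝ) (x : Fin n → ℝ) (t L : ℝ) : Set ((Fin n → ℝ) × ℝ) :=
  (spCube n x L) ×ˢ (Set.Ioo (t - L ^ p) (t + L ^ p))

/-- The upper part `R^+(γ) = Q(x,L) × (t + γL^p, t + L^p)` of the parabolic rectangle. -/
def pRectPlus (n : ℕ) (p : ℝ) (x : Fin n → ℝ) (t L γ : ℝ) : Set ((Fin n → ℝ) × ℝ) :=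
  (spCube n x L) ×ˢ (Set.Ioo (t + γ * L ^ p) (t + L ^ p))

/-- The lower part `R^-(γ) = Q(x,L) × (t - L^p, t - γL^p)` of the parabolic rectangle. -/
def pRectMinus (n : ℕ) (p : ℝ) (x : Fin n → ℝ) (t L γ : ℝ) : Set ((Fin n → ℝ) × ℝ) :=
  (spCube n x L) ×ˢ (Set.Ioo (t - L ^ p) (t - γ * L ^ p))

/-- The time translate `A + (0,s) = {(y, r + s) : (y,r) ∈ A}`. -/
def tAdd (n : ℕ) (A : Set ((Fin n → ℝ) × ℝ)) (s : ℝ) : Set ((Fin n → ℝ) × ℝ) :=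
  {z | (z.1, z.2 - s) ∈ A}

/-- A weight: a nonnegative (`ℝ≥0∞`-valued) a.e. measurable, locally integrable function. -/
def IsWeight (n : ℕ) (w : (Fin n → ℝ) × ℝ → ℝ≥0∞) : Prop :=
  AEMeasurable w (volume : Measure ((Fin n → ℝ) × ℝ)) ∧
    ∀ K : Set ((Fin n → ℝ) × ℝ), IsCompact K → ∫⁻ z in K, w z ∂volume < ⊤

/-- `C` is an admissible constant in the parabolic Muckenhoupt `A_q^+(γ)` condition (`1 < q`). -/
def IsAqPlusConst (n : ℕ) (p q γ : ℝ) (w : (Fin n → ℝ) × ℝ → ℝ≥0∞) (C : ℝ≥0∞) : Prop :=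
  ∀ (x : Fin n → ℝ) (t L : ℝ), 0 < L →
    (⨍⁻ z in pRectMinus n p x t L γ, w z ∂volume) *
      (⨍⁻ z in pRectPlus n p x t L γ, w z ^ (1 / (1 - q)) ∂volume) ^ (q - 1) ≤ C

/-- `C` is an admissible constant in the parabolic Muckenhoupt `A_q^-(γ)` condition (`1 < q`),
i.e. the condition with the time direction reversed. -/
def IsAqMinusConst (n : ℕ) (p q γ : ℝ) (w : (Fin n → ℝ) × ℝ → ℝ≥0∞) (C : ℝ≥0∞) : Prop :=
  ∀ (x : Fin n → ℝ) (t L : ℝ), 0 < L →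
    (⨍⁻ z in pRectPlus n p x t L γ, w z ∂volume) *
      (⨍⁻ z in pRectMinus n p x t L γ, w z ^ (1 / (1 - q)) ∂volume) ^ (q - 1) ≤ C

/-- The parabolic Muckenhoupt class `A_q^+(γ)` for `1 < q`. -/
def MemAqPlus (n : ℕ) (p q γ : ℝ) (w : (Fin n → ℝ) × ℝ → ℝ≥0∞) : Prop :=
  ∃ C : ℝ≥0∞, C ≠ ⊤ ∧ IsAqPlusConst n p q γ w C

/-- The parabolic Muckenhoupt class `A_q^-(γ)` for `1 < q`. -/
def MemAqMinus (n : ℕ) (p q γ : ℝ) (w : (Fin n → ℝ) × ℝ → ℝ≥0∞) : Prop :=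
  ∃ C : ℝ≥0∞, C ≠ ⊤ ∧ IsAqMinusConst n p q γ w C

/-- `C` is an admissible constant in the parabolic Muckenhoupt `A_1^+(γ)` condition. -/
def IsA1PlusConst (n : ℕ) (p γ : ℝ) (w : (Fin n → ℝ) × ℝ → ℝ≥0∞) (C : ℝ≥0∞) : Prop :=
  ∀ (x : Fin n → ℝ) (t L : ℝ), 0 < L →
    (⨍⁻ z in pRectMinus n p x t L γ, w z ∂volume) ≤
      C * essInf w (volume.restrict (pRectPlus n p x t L γ))

/-- `C` is an admissible constant in the parabolic Muckenhoupt `A_1^-(γ)` condition. -/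
def IsA1MinusConst (n : ℕ) (p γ : ℝ) (w : (Fin n → ℝ) × ℝ → ℝ≥0∞) (C : ℝ≥0∞) : Prop :=
  ∀ (x : Fin n → ℝ) (t L : ℝ), 0 < L →
    (⨍⁻ z in pRectPlus n p x t L γ, w z ∂volume) ≤
      C * essInf w (volume.restrict (pRectMinus n p x t L γ))

/-- The parabolic Muckenhoupt class `A_1^+(γ)`. -/
def MemA1Plus (n : ℕ) (p γ : ℝ) (w : (Fin n → ℝ) × ℝ → ℝ≥0∞) : Prop :=
  ∃ C : ℝ≥0∞, 0 < C ∧ C ≠ ⊤ ∧ IsA1PlusConst n p γ w C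

/-- The parabolic Muckenhoupt class `A_1^-(γ)`. -/
def MemA1Minus (n : ℕ) (p γ : ℝ) (w : (Fin n → ℝ) × ℝ → ℝ≥0∞) : Prop :=
  ∃ C : ℝ≥0∞, 0 < C ∧ C ≠ ⊤ ∧ IsA1MinusConst n p γ w C

/-- Unified admissible `A_q^+(γ)` constant for `1 ≤ q < ∞`. -/
def IsAPlusConst (n : ℕ) (p q γ : ℝ) (w : (Fin n → ℝ) × ℝ → ℝ≥0∞) (C : ℝ≥0∞) : Prop :=
  if q = 1 then IsA1PlusConst n p γ w C else IsAqPlusConst n p q γ w C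

/-- Unified parabolic Muckenhoupt class `A_q^+(γ)` for `1 ≤ q < ∞`. -/
def MemAPlus (n : ℕ) (p q γ : ℝ) (w : (Fin n → ℝ) × ℝ → ℝ≥0∞) : Prop :=
  ∃ C : ℝ≥0∞, C ≠ ⊤ ∧ IsAPlusConst n p q γ w C

/-- The uncentered forward-in-time parabolic maximal function `M^{γ+}g`. -/
def MaxPlus (n : ℕ) (p γ : ℝ) (g : (Fin n → ℝ) × ℝ → ℝ≥0∞) (z : (Fin n → ℝ) × ℝ) : ℝ≥0∞ :=
  ⨆ (x : Fin n → ℝ) (t : ℝ) (L : ℝ) (_ : 0 < L) (_ : z ∈ pRectMinus n p x t L γ),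
    ⨍⁻ y in pRectPlus n p x t L γ, g y ∂volume

/-- The uncentered backward-in-time parabolic maximal function `M^{γ-}g`. -/
def MaxMinus (n : ℕ) (p γ : ℝ) (g : (Fin n → ℝ) × ℝ → ℝ≥0∞) (z : (Fin n → ℝ) × ℝ) : ℝ≥0∞ :=
  ⨆ (x : Fin n → ℝ) (t : ℝ) (L : ℝ) (_ : 0 < L) (_ : z ∈ pRectPlus n p x t L γ),
    ⨍⁻ y in pRectMinus n p x t L γ, g y ∂volume

/-- The qualitative measure condition with parameters `(γ, α, β)`:
for every parabolic rectangle `R` and every measurable `E ⊆ R^+(γ)` with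
`w(E) < β·w(R^-(γ))` one has `|E| < α·|R^+(γ)|`. -/
def QualMeasCond (n : ℕ) (p γ α β : ℝ) (w : (Fin n → ℝ) × ℝ → ℝ≥0∞) : Prop :=
  ∀ (x : Fin n → ℝ) (t L : ℝ), 0 < L →
    ∀ E : Set ((Fin n → ℝ) × ℝ), E ⊆ pRectPlus n p x t L γ → MeasurableSet E →
      (∫⁻ z in E, w z ∂volume) <
          ENNReal.ofReal β * ∫⁻ z in pRectMinus n p x t L γ, w z ∂volume →
        volume E < ENNReal.ofReal α * volume (pRectPlus n p x t L γ)

end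

/-!
All the conditions in the statement bound the product
`aqProd X Y = (⨍_X w) (⨍_Y w^{1/(1-q)})^{q-1}` over two boxes on a common cube `Q(x,L)`, each
of height `h L^p`, separated by a gap `g L^p`; they differ only in `(h, g)`. The point is that a
bound for one pair `(h, g)` gives one for any other pair `(h', g')`.

Subdivide both `(h', g')`-boxes into `M^n N` pieces of side `L/M` and height `h' L^p / N`; each
average is dominated by the average over one piece. Any two pieces are joined by a chain of `M`
boxes of a common side `R ≥ 3L/M`, consecutive ones lying in a pair of `(h, g)`-boxes at scale `R`.
Each link advances the time by `s + g R^p`, `s` the piece height; since `p > 1`, the quantity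
`M g (3L/M)^p` tends to `0`, so for large `M` and `N` a suitable `R` makes the `M` links end exactly
at the second piece. Hölder's inequality gives `aqProd Y Y ≥ 1`, which lets the bounds along the
chain multiply.
-/

open Filter Topology

section Muckenhoupt

variable {α : Type*} [MeasurableSpace α] {μ : Measure α}

noncomputable def aqProd (μ : Measure α) (q : ℝ) (w : α → ℝ≥0∞) (X Y : Set α) : ℝ≥0∞ :=
  (⨍⁻ z in X, w z ∂μ) * (⨍⁻ z in Y, w z ^ (1 / (1 - q)) ∂μ) ^ (q - 1)

/-- Hölder's inequality applied to `1 = w^{1/q} · w^{-1/q}`. -/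
theorem one_le_lintegral_mul_lintegral_rpow [IsProbabilityMeasure μ] {q : ℝ} (hq : 1 < q)
    {w : α → ℝ≥0∞} (hw : AEMeasurable w μ) (hfin : ∀ᵐ z ∂μ, w z ≠ ⊤)
    (h0 : ∫⁻ z, w z ∂μ ≠ 0) :
    1 ≤ (∫⁻ z, w z ∂μ) * (∫⁻ z, w z ^ (1 / (1 - q)) ∂μ) ^ (q - 1) := by
  have hq0 : 0 < q := by linarith
  by_cases hσ : ∫⁻ z, w z ^ (1 / (1 - q)) ∂μ = ⊤
  · rw [hσ, ENNReal.top_rpow_of_pos (by linarith), ENNReal.mul_top h0]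
    exact le_top
  have hpos : ∀ᵐ z ∂μ, w z ≠ 0 := by
    filter_upwards [ae_lt_top' (hw.pow_const _) hσ] with z hz h
    rw [h, ENNReal.zero_rpow_of_neg (div_neg_of_pos_of_neg one_pos (by linarith))] at hz
    exact hz.ne rfl
  have hconj : q.HolderConjugate (q / (q - 1)) :=
    (Real.holderConjugate_iff_eq_conjExponent hq).2 rfl
  have hone : ∀ᵐ z ∂μ, w z ^ q⁻¹ * w z ^ (-q⁻¹) = 1 := by
    filter_upwards [hfin, hpos] with z hz hz0
    rw [← ENNReal.rpow_add _ _ hz0 hz, add_neg_cancel, ENNReal.rpow_zero]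
  have holder := ENNReal.lintegral_mul_le_Lp_mul_Lq μ hconj (hw.pow_const q⁻¹)
    (hw.pow_const (-q⁻¹))
  simp only [Pi.mul_apply, lintegral_congr_ae hone, lintegral_one, measure_univ,
    ← ENNReal.rpow_mul, inv_mul_cancel₀ hq0.ne', ENNReal.rpow_one] at holder
  have hexp : -q⁻¹ * (q / (q - 1)) = 1 / (1 - q) := by
    rw [show (1 : ℝ) - q = -(q - 1) by ring]
    field_simp
  rw [hexp] at holder
  calc (1 : ℝ≥0∞) = 1 ^ q := (ENNReal.one_rpow q).symm
    _ ≤ ((∫⁻ z, w z ∂μ) ^ (1 / q) *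
          (∫⁻ z, w z ^ (1 / (1 - q)) ∂μ) ^ (1 / (q / (q - 1)))) ^ q :=
        ENNReal.rpow_le_rpow holder hq0.le
    _ = _ := by
        rw [ENNReal.mul_rpow_of_nonneg _ _ hq0.le, ← ENNReal.rpow_mul, ← ENNReal.rpow_mul,
          one_div_mul_cancel hq0.ne', ENNReal.rpow_one, show 1 / (q / (q - 1)) * q = q - 1 by
            field_simp]

theorem one_le_aqProd_self {q : ℝ} (hq : 1 < q) {w : α → ℝ≥0∞} {S : Set α}
    (hw : AEMeasurable w (μ.restrict S)) (hS0 : μ S ≠ 0) (hS : μ S ≠ ⊤)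
    (hint : ∫⁻ z in S, w z ∂μ ≠ ⊤) (h0 : ⨍⁻ z in S, w z ∂μ ≠ 0) :
    1 ≤ aqProd μ q w S S := by
  have : IsProbabilityMeasure ((μ S)⁻¹ • μ.restrict S) :=
    ProbabilityTheory.cond_isProbabilityMeasure_of_finite hS0 hS
  simp only [aqProd, setLAverage_eq'] at *
  exact one_le_lintegral_mul_lintegral_rpow hq (hw.smul_measure _)
    (Measure.ae_smul_measure ((ae_lt_top' hw hint).mono fun z hz => hz.ne) _) h0

theorem setLAverage_rpow_eq_top {q : ℝ} (hq : 1 < q) {w : α → ℝ≥0∞} {S : Set α}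
    (hw : AEMeasurable w (μ.restrict S)) (hS0 : μ S ≠ 0) (hS : μ S ≠ ⊤)
    (h0 : ⨍⁻ z in S, w z ∂μ = 0) : ⨍⁻ z in S, w z ^ (1 / (1 - q)) ∂μ = ⊤ := by
  rw [setLAverage_eq, ENNReal.div_eq_zero_iff, or_iff_left hS,
    lintegral_eq_zero_iff' hw] at h0
  have hσ : (fun z => w z ^ (1 / (1 - q))) =ᵐ[μ.restrict S] fun _ => ⊤ := by
    filter_upwards [h0] with z hz
    rw [hz, Pi.zero_apply, ENNReal.zero_rpow_of_neg (div_neg_of_pos_of_neg one_pos (by linarith))]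
  rw [laverage_congr hσ, setLAverage_const hS0 hS]

/-- Insert the factor `aqProd Y Y ≥ 1`. -/
theorem aqProd_le_mul {q : ℝ} (hq : 1 < q) {w : α → ℝ≥0∞} {X Y Z : Set α}
    (hw : AEMeasurable w (μ.restrict Y)) (hY0 : μ Y ≠ 0) (hY : μ Y ≠ ⊤)
    (hint : ∫⁻ z in Y, w z ∂μ ≠ ⊤) {K₁ K₂ : ℝ≥0∞} (hK₁ : K₁ ≠ ⊤)
    (h₁ : aqProd μ q w X Y ≤ K₁) (h₂ : aqProd μ q w Y Z ≤ K₂) :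
    aqProd μ q w X Z ≤ K₁ * K₂ := by
  by_cases hA : ⨍⁻ z in Y, w z ∂μ = 0
  · have hX : ⨍⁻ z in X, w z ∂μ = 0 := by
      by_contra hX
      rw [aqProd, setLAverage_rpow_eq_top hq hw hY0 hY hA,
        ENNReal.top_rpow_of_pos (by linarith), ENNReal.mul_top hX, top_le_iff] at h₁
      exact hK₁ h₁
    simp [aqProd, hX]
  calc aqProd μ q w X Z ≤ aqProd μ q w X Z * aqProd μ q w Y Y :=
        le_mul_of_one_le_right' (one_le_aqProd_self hq hw hY0 hY hint hA)
    _ = aqProd μ q w X Y * aqProd μ q w Y Z := by simp only [aqProd]; ring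
    _ ≤ K₁ * K₂ := mul_le_mul' h₁ h₂

theorem aqProd_le_pow_of_chain {q : ℝ} (hq : 1 < q) {w : α → ℝ≥0∞} (hw : AEMeasurable w μ)
    (Y : ℕ → Set α) (hY0 : ∀ t, μ (Y t) ≠ 0) (hY : ∀ t, μ (Y t) ≠ ⊤)
    (hint : ∀ t, ∫⁻ z in Y t, w z ∂μ ≠ ⊤) {K : ℝ≥0∞} (hK : K ≠ ⊤) {m : ℕ} (hm : 0 < m)
    (hlink : ∀ t < m, aqProd μ q w (Y t) (Y (t + 1)) ≤ K) :
    aqProd μ q w (Y 0) (Y m) ≤ K ^ m := by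
  induction m, hm using Nat.le_induction with
  | base => simpa using hlink 0 one_pos
  | succ m hm ih =>
    rw [pow_succ]
    exact aqProd_le_mul hq hw.restrict (hY0 m) (hY m) (hint m) (ENNReal.pow_ne_top hK)
      (ih fun t ht => hlink t (by omega)) (hlink m (by omega))

theorem setLAverage_le_mul_of_subset (f : α → ℝ≥0∞) {X X' : Set α} {r : ℝ≥0∞}
    (hX : X ⊆ X') (hX'0 : μ X' ≠ 0) (hX' : μ X' ≠ ⊤) (hr : μ X' ≤ r * μ X) :
    ⨍⁻ z in X, f z ∂μ ≤ r * ⨍⁻ z in X', f z ∂μ := by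
  rw [setLAverage_eq, setLAverage_eq]
  calc (∫⁻ z in X, f z ∂μ) / μ X ≤ (∫⁻ z in X', f z ∂μ) / μ X :=
        ENNReal.div_le_div_right (lintegral_mono_set hX) _
    _ ≤ r * ((∫⁻ z in X', f z ∂μ) / μ X') := by
        refine ENNReal.div_le_of_le_mul ?_
        calc ∫⁻ z in X', f z ∂μ = (∫⁻ z in X', f z ∂μ) / μ X' * μ X' :=
              (ENNReal.div_mul_cancel hX'0 hX').symm
          _ ≤ (∫⁻ z in X', f z ∂μ) / μ X' * (r * μ X) := by gcongr
          _ = r * ((∫⁻ z in X', f z ∂μ) / μ X') * μ X := by ring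

theorem aqProd_le_rpow_mul_of_subset {q : ℝ} (hq : 1 ≤ q) (w : α → ℝ≥0∞)
    {X X' Y Y' : Set α} {r : ℝ≥0∞} (hX : X ⊆ X') (hY : Y ⊆ Y')
    (hX'0 : μ X' ≠ 0) (hX' : μ X' ≠ ⊤) (hY'0 : μ Y' ≠ 0) (hY' : μ Y' ≠ ⊤)
    (hrX : μ X' ≤ r * μ X) (hrY : μ Y' ≤ r * μ Y) :
    aqProd μ q w X Y ≤ r ^ q * aqProd μ q w X' Y' := by
  have hq1 : 0 ≤ q - 1 := by linarith
  calc aqProd μ q w X Y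
      ≤ (r * ⨍⁻ z in X', w z ∂μ) * (r * ⨍⁻ z in Y', w z ^ (1 / (1 - q)) ∂μ) ^ (q - 1) :=
        mul_le_mul' (setLAverage_le_mul_of_subset _ hX hX'0 hX' hrX)
          (ENNReal.rpow_le_rpow (setLAverage_le_mul_of_subset _ hY hY'0 hY' hrY) hq1)
    _ = r ^ q * aqProd μ q w X' Y' := by
        rw [aqProd, ENNReal.mul_rpow_of_nonneg _ _ hq1,
          show q = 1 + (q - 1) by ring, ENNReal.rpow_add_of_nonneg _ _ zero_le_one hq1,
          ENNReal.rpow_one, show 1 + (q - 1) - 1 = q - 1 by ring]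
        ring

theorem exists_setLAverage_le_of_ae_subset_iUnion {ι : Type*} [Fintype ι] [Nonempty ι]
    (f : α → ℝ≥0∞) {S : Set α} (P : ι → Set α) (hcover : μ (S \ ⋃ i, P i) = 0)
    (hP : ∀ i, μ (P i) ≠ ⊤) (hsum : ∑ i, μ (P i) ≤ μ S) :
    ∃ i, ⨍⁻ z in S, f z ∂μ ≤ ⨍⁻ z in P i, f z ∂μ := by
  obtain ⟨i₀, -, hmax⟩ := Finset.exists_max_image Finset.univ (fun i => ⨍⁻ z in P i, f z ∂μ)
    Finset.univ_nonempty
  refine ⟨i₀, ?_⟩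
  rw [setLAverage_eq]
  refine ENNReal.div_le_of_le_mul ?_
  calc ∫⁻ z in S, f z ∂μ ≤ ∫⁻ z in ⋃ i, P i, f z ∂μ := lintegral_mono_set' (ae_le_set.2 hcover)
    _ ≤ ∑ i, ∫⁻ z in P i, f z ∂μ := (lintegral_iUnion_le _ _).trans (tsum_fintype _).le
    _ = ∑ i, μ (P i) * ⨍⁻ z in P i, f z ∂μ :=
        Finset.sum_congr rfl fun i _ => (measure_mul_setLAverage _ (hP i)).symm
    _ ≤ ∑ i, μ (P i) * ⨍⁻ z in P i₀, f z ∂μ := by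
        gcongr with i
        exact hmax i (Finset.mem_univ i)
    _ ≤ (⨍⁻ z in P i₀, f z ∂μ) * μ S := by
        rw [← Finset.sum_mul, mul_comm]
        gcongr

end Muckenhoupt

section SpaceTimeBox

variable {n : ℕ}

def spaceTimeBox (n : ℕ) (x : Fin n → ℝ) (r a b : ℝ) : Set ((Fin n → ℝ) × ℝ) :=
  spCube n x r ×ˢ Ioo a b

theorem pRectMinus_eq_spaceTimeBox (p : ℝ) (x : Fin n → ℝ) (t L γ : ℝ) :
    pRectMinus n p x t L γ = spaceTimeBox n x L (t - L ^ p) (t - γ * L ^ p) := rfl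

theorem pRectPlus_eq_spaceTimeBox (p : ℝ) (x : Fin n → ℝ) (t L γ : ℝ) :
    pRectPlus n p x t L γ = spaceTimeBox n x L (t + γ * L ^ p) (t + L ^ p) := rfl

theorem tAdd_spaceTimeBox (x : Fin n → ℝ) (r a b s : ℝ) :
    tAdd n (spaceTimeBox n x r a b) s = spaceTimeBox n x r (a + s) (b + s) := by
  ext z
  simp only [tAdd, spaceTimeBox, mem_ofPred_eq, mem_prod, mem_Ioo]
  constructor <;> rintro ⟨h₁, h₂, h₃⟩ <;> exact ⟨h₁, by linarith, by linarith⟩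

theorem spCube_eq_pi (x : Fin n → ℝ) (r : ℝ) :
    spCube n x r = univ.pi fun i => Icc (x i - r) (x i + r) := by
  ext y
  simp only [spCube, mem_ofPred_eq, Set.mem_pi, mem_univ, forall_const, mem_Icc, abs_sub_le_iff]
  exact forall_congr' fun i => by constructor <;> rintro ⟨h₁, h₂⟩ <;> constructor <;> linarith

theorem spCube_eq_closedBall (x : Fin n → ℝ) {r : ℝ} (hr : 0 ≤ r) :
    spCube n x r = Metric.closedBall x r := by
  ext y
  simp [spCube, dist_pi_le_iff hr, Real.dist_eq]

theorem spCube_subset_spCube {x x' : Fin n → ℝ} {r r' : ℝ} (hr' : 0 ≤ r')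
    (h : dist x' x + r' ≤ r) : spCube n x' r' ⊆ spCube n x r := by
  rw [spCube_eq_closedBall x' hr', spCube_eq_closedBall x (dist_nonneg.trans (by linarith))]
  exact Metric.closedBall_subset_closedBall' (by linarith)

theorem volume_spaceTimeBox (x : Fin n → ℝ) {r : ℝ} (hr : 0 ≤ r) (a b : ℝ) :
    volume (spaceTimeBox n x r a b) = ENNReal.ofReal ((2 * r) ^ n * (b - a)) := by
  rw [spaceTimeBox, Measure.volume_eq_prod, Measure.prod_prod, spCube_eq_closedBall x hr,
    Real.volume_pi_closedBall x hr, Real.volume_Ioo, Fintype.card_fin,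
    ← ENNReal.ofReal_mul (by positivity)]

theorem IsWeight.lintegral_spaceTimeBox_ne_top {w : (Fin n → ℝ) × ℝ → ℝ≥0∞}
    (hw : IsWeight n w) (x : Fin n → ℝ) (r a b : ℝ) :
    ∫⁻ z in spaceTimeBox n x r a b, w z ≠ ⊤ := by
  have hK : IsCompact (spCube n x r ×ˢ Icc a b) := by
    rw [spCube_eq_pi]
    exact (isCompact_univ_pi fun i => isCompact_Icc).prod isCompact_Icc
  exact ((lintegral_mono_set (prod_mono_right Ioo_subset_Icc_self)).trans_lt (hw.2 _ hK)).ne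

theorem exists_mem_Icc_add_mul {N : ℕ} (hN : 0 < N) {a h y : ℝ} (hh : 0 < h)
    (hy : y ∈ Icc a (a + N * h)) : ∃ i : Fin N, a + i * h ≤ y ∧ y ≤ a + i * h + h := by
  set t := (y - a) / h
  have ht : y = a + t * h := by simp only [t]; field_simp; ring
  have ht0 : 0 ≤ t := div_nonneg (by linarith [hy.1]) hh.le
  have htN : t ≤ N := by rw [div_le_iff₀ hh]; linarith [hy.2]
  obtain ⟨i, hiN, hi₁, hi₂⟩ : ∃ i < N, (i : ℝ) ≤ t ∧ t ≤ i + 1 := by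
    refine ⟨min (N - 1) ⌊t⌋₊, by omega,
      (Nat.cast_le.2 (min_le_right _ _)).trans (Nat.floor_le ht0), ?_⟩
    rcases le_total ⌊t⌋₊ (N - 1) with h | h
    · rw [min_eq_right h]
      exact (Nat.lt_floor_add_one t).le
    · rw [min_eq_left h, Nat.cast_sub (by omega), Nat.cast_one, sub_add_cancel]
      exact htN
  exact ⟨⟨i, hiN⟩, by nlinarith, by nlinarith⟩

noncomputable def subcubeCenter (x : Fin n → ℝ) (L : ℝ) (M : ℕ) (k : Fin n → Fin M) :
    Fin n → ℝ :=
  fun j => x j - L + (2 * k j + 1) * (L / M)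

theorem spCube_subset_iUnion_subcube {M : ℕ} (hM : 0 < M) (x : Fin n → ℝ) {L : ℝ}
    (hL : 0 < L) : spCube n x L ⊆ ⋃ k, spCube n (subcubeCenter x L M k) (L / M) := by
  intro y hy
  have hM' : (0 : ℝ) < M := Nat.cast_pos.2 hM
  have hcoord : ∀ j, ∃ k : Fin M, |y j - subcubeCenter x L M (fun _ => k) j| ≤ L / M := by
    intro j
    obtain ⟨k, hk₁, hk₂⟩ := exists_mem_Icc_add_mul hM (a := x j - L) (y := y j)
      (by positivity : 0 < 2 * (L / M))
      ⟨by linarith [(abs_le.1 (hy j)).1], by field_simp; linarith [(abs_le.1 (hy j)).2]⟩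
    have e : (2 * (k : ℝ) + 1) * (L / M) = k * (2 * (L / M)) + L / M := by ring
    refine ⟨k, abs_le.2 ⟨?_, ?_⟩⟩ <;> simp only [subcubeCenter] <;> linarith
  choose k hk using hcoord
  exact mem_iUnion.2 ⟨k, hk⟩

theorem dist_subcubeCenter_le {M : ℕ} (hM : 0 < M) (x : Fin n → ℝ) {L : ℝ} (hL : 0 ≤ L)
    (k : Fin n → Fin M) : dist (subcubeCenter x L M k) x ≤ L := by
  refine (dist_pi_le_iff hL).2 fun j => ?_
  have hM' : (0 : ℝ) < M := Nat.cast_pos.2 hM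
  have hk : ((k j : ℕ) : ℝ) + 1 ≤ M := by exact_mod_cast (k j).isLt
  have hLM : (2 * (k j : ℕ) + 1) * (L / M) ≤ 2 * L := by
    rw [mul_div_assoc', div_le_iff₀ hM']
    nlinarith
  rw [Real.dist_eq, subcubeCenter, abs_le]
  constructor <;> nlinarith [div_nonneg hL hM'.le]

end SpaceTimeBox

section Subdivision

variable {n M N : ℕ}

def subbox (x : Fin n → ℝ) (L a s : ℝ) (ki : (Fin n → Fin M) × Fin N) :
    Set ((Fin n → ℝ) × ℝ) :=
  spaceTimeBox n (subcubeCenter x L M ki.1) (L / M) (a + ki.2 * s) (a + ki.2 * s + s)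

theorem volume_diff_iUnion_subbox (hM : 0 < M) (hN : 0 < N) (x : Fin n → ℝ) {L : ℝ}
    (hL : 0 < L) (a : ℝ) {s : ℝ} (hs : 0 < s) :
    volume (spaceTimeBox n x L a (a + N * s) \ ⋃ ki, subbox (M := M) (N := N) x L a s ki) =
      0 := by
  refine measure_mono_null (t := univ ×ˢ range fun i : ℕ => a + i * s) ?_ ?_
  · rintro ⟨y, t⟩ ⟨⟨hy, ht⟩, hnot⟩
    refine ⟨mem_univ _, ?_⟩
    by_contra hT
    obtain ⟨k, hk⟩ := mem_iUnion.1 (spCube_subset_iUnion_subcube hM x hL hy)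
    obtain ⟨i, hi₁, hi₂⟩ := exists_mem_Icc_add_mul hN hs ⟨ht.1.le, ht.2.le⟩
    refine hnot (mem_iUnion.2 ⟨(k, i), hk, hi₁.lt_of_ne fun h => hT ⟨i, h⟩,
      hi₂.lt_of_ne fun h => hT ⟨i + 1, ?_⟩⟩)
    push_cast
    linarith
  · rw [Measure.volume_eq_prod, Measure.prod_prod, (countable_range _).measure_zero, mul_zero]

theorem sum_volume_subbox (hM : 0 < M) (x : Fin n → ℝ) {L : ℝ} (hL : 0 ≤ L) (a s : ℝ) :
    ∑ ki, volume (subbox (M := M) (N := N) x L a s ki) =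
      volume (spaceTimeBox n x L a (a + N * s)) := by
  simp only [subbox, volume_spaceTimeBox _ (div_nonneg hL M.cast_nonneg), add_sub_cancel_left,
    volume_spaceTimeBox _ hL, Finset.sum_const, Finset.card_univ, Fintype.card_prod,
    Fintype.card_fun, Fintype.card_fin, nsmul_eq_mul]
  rw [← ENNReal.ofReal_natCast, ← ENNReal.ofReal_mul (by positivity)]
  congr 1
  have hM' : (M : ℝ) ≠ 0 := Nat.cast_ne_zero.2 hM.ne'
  push_cast
  rw [← mul_div_assoc, div_pow]
  field_simp

theorem exists_setLAverage_le_subbox (f : (Fin n → ℝ) × ℝ → ℝ≥0∞) (hM : 0 < M) (hN : 0 < N)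
    (x : Fin n → ℝ) {L : ℝ} (hL : 0 < L) (a : ℝ) {s : ℝ} (hs : 0 < s) :
    ∃ ki : (Fin n → Fin M) × Fin N,
      ⨍⁻ z in spaceTimeBox n x L a (a + N * s), f z ∂volume ≤
        ⨍⁻ z in subbox x L a s ki, f z ∂volume := by
  have : Nonempty (Fin M) := ⟨⟨0, hM⟩⟩
  have : Nonempty (Fin N) := ⟨⟨0, hN⟩⟩
  exact exists_setLAverage_le_of_ae_subset_iUnion f _ (volume_diff_iUnion_subbox hM hN x hL a hs)
    (fun ki => by
      rw [subbox, volume_spaceTimeBox _ (div_nonneg hL.le M.cast_nonneg)]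
      exact ofReal_ne_top)
    (sum_volume_subbox hM x hL.le a s).le

end Subdivision

section LagCondition

variable {n : ℕ} {p q h g : ℝ} {w : (Fin n → ℝ) × ℝ → ℝ≥0∞} {C : ℝ≥0∞}

def IsAqLagConst (n : ℕ) (p q h g : ℝ) (w : (Fin n → ℝ) × ℝ → ℝ≥0∞) (C : ℝ≥0∞) : Prop :=
  ∀ (x : Fin n → ℝ) (L a b c d : ℝ), 0 < L → b - a = h * L ^ p → c - b = g * L ^ p →
    d - c = h * L ^ p → aqProd volume q w (spaceTimeBox n x L a b) (spaceTimeBox n x L c d) ≤ C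

def MemAqLag (n : ℕ) (p q h g : ℝ) (w : (Fin n → ℝ) × ℝ → ℝ≥0∞) : Prop :=
  ∃ C : ℝ≥0∞, C ≠ ⊤ ∧ IsAqLagConst n p q h g w C

/-- Both boxes fit into a pair of `(h, g)`-boxes of side `R`. -/
theorem IsAqLagConst.aqProd_le (hC : IsAqLagConst n p q h g w C) (hq : 1 ≤ q)
    {z z' : Fin n → ℝ} {ρ R s τ τ' K₁ K₂ : ℝ} (hρ : 0 < ρ) (hρR : ρ ≤ R)
    (hz : dist z' z ≤ R - ρ) (hs : 0 < s) (hsR : s ≤ h * R ^ p) (hτ' : τ' = τ + s + g * R ^ p)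
    (hK₁ : R ≤ K₁ * ρ) (hK₂ : h * R ^ p ≤ K₂ * s) :
    aqProd volume q w (spaceTimeBox n z ρ τ (τ + s)) (spaceTimeBox n z' ρ τ' (τ' + s)) ≤
      ENNReal.ofReal (K₁ ^ n * K₂) ^ q * C := by
  have hR : 0 < R := hρ.trans_le hρR
  have hB : (2 * R) ^ n * (h * R ^ p) ≤ K₁ ^ n * K₂ * ((2 * ρ) ^ n * s) := by
    have hK₁ρ : (2 * R) ^ n ≤ K₁ ^ n * (2 * ρ) ^ n := by
      rw [← mul_pow]
      exact pow_le_pow_left₀ (by positivity) (by linarith) n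
    calc (2 * R) ^ n * (h * R ^ p) ≤ K₁ ^ n * (2 * ρ) ^ n * (K₂ * s) :=
          mul_le_mul hK₁ρ hK₂ (by linarith) ((pow_nonneg (by positivity) n).trans hK₁ρ)
      _ = K₁ ^ n * K₂ * ((2 * ρ) ^ n * s) := by ring
  have hvol : ∀ (y y' : Fin n → ℝ) (c c' : ℝ), volume (spaceTimeBox n y R c (c + h * R ^ p)) ≤
      ENNReal.ofReal (K₁ ^ n * K₂) * volume (spaceTimeBox n y' ρ c' (c' + s)) :=
      fun y y' c c' => by
    rw [volume_spaceTimeBox _ hR.le, volume_spaceTimeBox _ hρ.le, add_sub_cancel_left,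
      add_sub_cancel_left, ← ENNReal.ofReal_mul' (by positivity)]
    exact ENNReal.ofReal_le_ofReal hB
  have hbox : ∀ (y : Fin n → ℝ) (c : ℝ), volume (spaceTimeBox n y R c (c + h * R ^ p)) ≠ 0 ∧
      volume (spaceTimeBox n y R c (c + h * R ^ p)) ≠ ⊤ := fun y c => by
    rw [volume_spaceTimeBox _ hR.le, add_sub_cancel_left]
    exact ⟨ENNReal.ofReal_pos.2 (by positivity [hs.trans_le hsR]) |>.ne', ofReal_ne_top⟩
  calc aqProd volume q w (spaceTimeBox n z ρ τ (τ + s)) (spaceTimeBox n z' ρ τ' (τ' + s))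
      ≤ ENNReal.ofReal (K₁ ^ n * K₂) ^ q * aqProd volume q w
          (spaceTimeBox n z R (τ + s - h * R ^ p) (τ + s - h * R ^ p + h * R ^ p))
          (spaceTimeBox n z R τ' (τ' + h * R ^ p)) := by
        refine aqProd_le_rpow_mul_of_subset hq w ?_ ?_ (hbox z _).1 (hbox z _).2 (hbox z _).1
          (hbox z _).2 ?_ ?_
        · exact prod_mono (spCube_subset_spCube hρ.le (by simpa using hρR))
            (Ioo_subset_Ioo (by linarith) (by linarith))
        · exact prod_mono (spCube_subset_spCube hρ.le (by linarith))
            (Ioo_subset_Ioo le_rfl (by linarith))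
        · exact hvol _ _ _ _
        · exact hvol _ _ _ _
    _ ≤ ENNReal.ofReal (K₁ ^ n * K₂) ^ q * C := by
        gcongr
        exact hC z R _ _ _ _ hR (by ring) (by rw [hτ']; ring) (by ring)

/-- Links the two boxes by the chain of `m` boxes whose centers lie on the segment `[z, z']`. -/
theorem IsAqLagConst.aqProd_le_pow (hC : IsAqLagConst n p q h g w C) (hCtop : C ≠ ⊤)
    (hq : 1 < q) (hw : IsWeight n w) {m : ℕ} (hm : 0 < m) {z z' : Fin n → ℝ}
    {ρ R s τ τ' K₁ K₂ : ℝ} (hρ : 0 < ρ) (hρR : ρ ≤ R) (hz : dist z z' ≤ m * (R - ρ))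
    (hs : 0 < s) (hsR : s ≤ h * R ^ p) (hτ' : τ' = τ + m * (s + g * R ^ p))
    (hK₁ : R ≤ K₁ * ρ) (hK₂ : h * R ^ p ≤ K₂ * s) :
    aqProd volume q w (spaceTimeBox n z ρ τ (τ + s)) (spaceTimeBox n z' ρ τ' (τ' + s)) ≤
      (ENNReal.ofReal (K₁ ^ n * K₂) ^ q * C) ^ m := by
  have hm' : (0 : ℝ) < m := Nat.cast_pos.2 hm
  set Y : ℕ → Set ((Fin n → ℝ) × ℝ) := fun t =>
    spaceTimeBox n (AffineMap.lineMap z z' ((t : ℝ) / m)) ρ (τ + t * (s + g * R ^ p))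
      (τ + t * (s + g * R ^ p) + s)
  have hvol : ∀ t, volume (Y t) = ENNReal.ofReal ((2 * ρ) ^ n * s) := fun t => by
    simp only [Y, volume_spaceTimeBox _ hρ.le, add_sub_cancel_left]
  have hchain := aqProd_le_pow_of_chain hq hw.1 Y
    (fun t => by rw [hvol]; exact (ENNReal.ofReal_pos.2 (by positivity)).ne')
    (fun t => by rw [hvol]; exact ofReal_ne_top)
    (fun t => hw.lintegral_spaceTimeBox_ne_top _ _ _ _)
    (mul_ne_top (rpow_ne_top_of_nonneg (by linarith : (0 : ℝ) ≤ q) ofReal_ne_top) hCtop) hm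
    (fun t _ => by
      refine hC.aqProd_le hq.le hρ hρR ?_ hs hsR (by push_cast; ring) hK₁ hK₂
      rw [dist_lineMap_lineMap, Real.dist_eq, ← sub_div, abs_div, abs_of_pos hm']
      push_cast
      rw [add_sub_cancel_left, abs_one, div_mul_eq_mul_div, one_mul, div_le_iff₀ hm']
      linarith)
  simpa [Y, hm'.ne', ← hτ'] using hchain

end LagCondition

theorem exists_nat_subdivision {p h h' g' : ℝ} (hp : 1 < p) (hh : 0 < h) (hh' : 0 < h')
    (hg' : 0 < g') (g : ℝ) :
    ∃ M N : ℕ, 0 < M ∧ 0 < N ∧ g * (3 / M) ^ p + h' / N ≤ g' / M ∧ h' / N ≤ h * (3 / M) ^ p := by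
  have hlim : Tendsto (fun M : ℕ => g * M * (3 / M) ^ p) atTop (𝓝 0) := by
    have := ((tendsto_rpow_neg_atTop (by linarith : 0 < p - 1)).comp
      tendsto_natCast_atTop_atTop).const_mul (g * 3 ^ p)
    rw [mul_zero] at this
    refine this.congr' ((eventually_gt_atTop 0).mono fun M hM => ?_)
    have hM' : (0 : ℝ) < M := Nat.cast_pos.2 hM
    simp only [Function.comp, Real.div_rpow zero_le_three hM'.le, Real.rpow_neg hM'.le,
      Real.rpow_sub_one hM'.ne']
    field_simp
  obtain ⟨M, hM, hMg⟩ := ((eventually_gt_atTop 0).and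
    (hlim.eventually (gt_mem_nhds (half_pos hg')))).exists
  have hM' : (0 : ℝ) < M := Nat.cast_pos.2 hM
  obtain ⟨N, hN⟩ := exists_nat_gt (h' / min (g' / (2 * M)) (h * (3 / M) ^ p))
  have hmin : 0 < min (g' / (2 * M)) (h * (3 / M) ^ p) := lt_min (by positivity) (by positivity)
  have hN' : h' / N < min (g' / (2 * M)) (h * (3 / M) ^ p) := by
    rwa [div_lt_comm₀ ((div_pos hh' hmin).trans hN) hmin]
  refine ⟨M, N, hM, Nat.cast_pos.1 ((div_pos hh' hmin).trans hN), ?_,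
    (hN'.trans_le (min_le_right _ _)).le⟩
  have hgM : g * (3 / M) ^ p < g' / (2 * M) := by
    rw [lt_div_iff₀ (by positivity)]
    linarith
  have : g' / M = g' / (2 * M) + g' / (2 * M) := by field_simp; ring
  linarith [hN'.trans_le (min_le_left _ _)]

theorem exists_chain_radius {p g M D s A B : ℝ} (hp : 0 < p) (hg : 0 < g) (hM : 1 ≤ M)
    (hA : 0 ≤ A) (hB : 0 ≤ B) (hs : 0 ≤ s) (hlo : g * A ^ p + s ≤ D / M)
    (hhi : D ≤ g * B ^ p) : ∃ R ∈ Icc A B, M * (s + g * R ^ p) = D := by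
  set y := (D / M - s) / g
  have hAy : A ^ p ≤ y := by rw [le_div_iff₀ hg]; linarith
  have hyB : y ≤ B ^ p := by
    have hDM : 0 ≤ D / M := by nlinarith [Real.rpow_nonneg hA p]
    have hD : D / M ≤ D :=
      div_le_self (by simpa using (le_div_iff₀ (by linarith : (0 : ℝ) < M)).1 hDM) hM
    rw [div_le_iff₀ hg]
    linarith
  have hy : 0 ≤ y := (Real.rpow_nonneg hA p).trans hAy
  refine ⟨y ^ p⁻¹, ⟨(Real.le_rpow_inv_iff_of_pos hA hy hp).2 hAy,
    (Real.rpow_inv_le_iff_of_pos hy hB hp).2 hyB⟩, ?_⟩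
  rw [Real.rpow_inv_rpow hy hp.ne']
  simp only [y]
  field_simp
  ring

theorem exists_subbox_chain_radius {p g h' g' : ℝ} (hp : 1 < p) (hg : 0 < g) (hh' : 0 < h')
    {M N : ℕ} (hM : 0 < M) (hN : 0 < N) (hgap : g * (3 / M) ^ p + h' / N ≤ g' / M) {L : ℝ}
    (hL : 0 < L) (i j : Fin N) :
    ∃ R ∈ Icc (3 * (L / M)) (max 1 ((g' + 2 * h') / g) * L),
      M * (h' * L ^ p / N + g * R ^ p) =
        (h' + g') * L ^ p + j * (h' * L ^ p / N) - i * (h' * L ^ p / N) := by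
  set ℓ := L ^ p
  set s := h' * ℓ / N
  have hM' : (0 : ℝ) < M := Nat.cast_pos.2 hM
  have hℓ : 0 < ℓ := Real.rpow_pos_of_pos hL p
  have hs : 0 < s := by positivity
  have hNs : N * s = h' * ℓ := by simp only [s]; field_simp
  have hi : (i : ℝ) + 1 ≤ N := by exact_mod_cast i.isLt
  have hj : (j : ℝ) + 1 ≤ N := by exact_mod_cast j.isLt
  have hs_i := mul_le_mul_of_nonneg_right hi hs.le
  have hs_j := mul_le_mul_of_nonneg_right hj hs.le
  have hi0 := mul_nonneg (Nat.cast_nonneg (α := ℝ) i) hs.le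
  have hj0 := mul_nonneg (Nat.cast_nonneg (α := ℝ) j) hs.le
  have hc : g' + 2 * h' ≤ g * max 1 ((g' + 2 * h') / g) ^ p := by
    have : (g' + 2 * h') / g ≤ max 1 ((g' + 2 * h') / g) ^ p :=
      (le_max_right 1 _).trans (Real.self_le_rpow_of_one_le (le_max_left 1 _) hp.le)
    rwa [div_le_iff₀' hg] at this
  refine exists_chain_radius (by linarith) hg (Nat.one_le_cast.2 hM) (by positivity)
    (by positivity) hs.le ?_ ?_
  · calc g * (3 * (L / M)) ^ p + s = (g * (3 / M) ^ p + h' / N) * ℓ := by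
          rw [show 3 * (L / M) = 3 / M * L by ring, Real.mul_rpow (by positivity) hL.le]
          simp only [s]
          ring
      _ ≤ g' / M * ℓ := mul_le_mul_of_nonneg_right hgap hℓ.le
      _ ≤ _ := by rw [div_mul_eq_mul_div]; gcongr; nlinarith
  · rw [Real.mul_rpow (by positivity) hL.le]
    nlinarith [mul_le_mul_of_nonneg_right hc hℓ.le]

section LagChange

variable {n : ℕ} {p q h g : ℝ} {w : (Fin n → ℝ) × ℝ → ℝ≥0∞} {C : ℝ≥0∞}

/-- Any lower piece is chained to any upper piece by `M` boxes of a common side `R ≥ 3L/M`,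
chosen so that the `M` time steps add up exactly to the distance between the pieces. -/
theorem IsAqLagConst.aqProd_subbox_le (hC : IsAqLagConst n p q h g w C) (hCtop : C ≠ ⊤)
    (hp : 1 < p) (hq : 1 < q) (hw : IsWeight n w) (hh : 0 ≤ h) (hg : 0 < g) {h' g' : ℝ}
    (hh' : 0 < h') {M N : ℕ} (hM : 0 < M) (hN : 0 < N) (hgap : g * (3 / M) ^ p + h' / N ≤ g' / M)
    (hsmall : h' / N ≤ h * (3 / M) ^ p) (x : Fin n → ℝ) {L : ℝ} (hL : 0 < L) (a : ℝ)
    (k k' : Fin n → Fin M) (i j : Fin N) :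
    aqProd volume q w (subbox x L a (h' * L ^ p / N) (k, i))
        (subbox x L (a + (h' + g') * L ^ p) (h' * L ^ p / N) (k', j)) ≤
      (ENNReal.ofReal ((max 1 ((g' + 2 * h') / g) * M) ^ n *
        (h * max 1 ((g' + 2 * h') / g) ^ p * N / h')) ^ q * C) ^ M := by
  set κ := max 1 ((g' + 2 * h') / g)
  set s := h' * L ^ p / N
  set ρ := L / M
  have hM' : (0 : ℝ) < M := Nat.cast_pos.2 hM
  have hs : 0 < s := by positivity
  have hρ : 0 < ρ := by positivity
  obtain ⟨R, ⟨h3ρR, hRc⟩, hRτ⟩ := exists_subbox_chain_radius hp hg hh' hM hN hgap hL i j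
  have hR : 0 < R := by linarith
  refine hC.aqProd_le_pow hCtop hq hw hM hρ (show ρ ≤ R by linarith) ?_ hs ?_ (by linarith)
    ?_ ?_
  · calc dist (subcubeCenter x L M k) (subcubeCenter x L M k')
        ≤ dist (subcubeCenter x L M k) x + dist (subcubeCenter x L M k') x :=
          dist_triangle_right _ _ _
      _ ≤ L + L := add_le_add (dist_subcubeCenter_le hM x hL.le k)
          (dist_subcubeCenter_le hM x hL.le k')
      _ = M * (2 * ρ) := by simp only [ρ]; field_simp; ring
      _ ≤ M * (R - ρ) := by gcongr; linarith
  · calc s = h' / N * L ^ p := by simp only [s]; ring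
      _ ≤ h * (3 / M) ^ p * L ^ p := by gcongr
      _ = h * (3 * ρ) ^ p := by
          rw [mul_assoc, ← Real.mul_rpow (by positivity) hL.le]
          simp only [ρ]
          ring_nf
      _ ≤ h * R ^ p := by gcongr
  · calc R ≤ κ * L := hRc
      _ = κ * M * ρ := by simp only [ρ]; field_simp
  · calc h * R ^ p ≤ h * (κ * L) ^ p := by gcongr
      _ = h * κ ^ p * N / h' * s := by
          rw [Real.mul_rpow (by positivity) hL.le]
          simp only [s]
          field_simp

theorem IsAqLagConst.memAqLag (hC : IsAqLagConst n p q h g w C) (hCtop : C ≠ ⊤) (hp : 1 < p)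
    (hq : 1 < q) (hw : IsWeight n w) (hh : 0 < h) (hg : 0 < g) {h' g' : ℝ} (hh' : 0 < h')
    (hg' : 0 < g') : MemAqLag n p q h' g' w := by
  obtain ⟨M, N, hM, hN, hgap, hsmall⟩ := exists_nat_subdivision hp hh hh' hg' g
  set κ := max 1 ((g' + 2 * h') / g)
  refine ⟨(ENNReal.ofReal ((κ * M) ^ n * (h * κ ^ p * N / h')) ^ q * C) ^ M,
    pow_ne_top (mul_ne_top (rpow_ne_top_of_nonneg (by linarith) ofReal_ne_top) hCtop),
    fun x L a b c d hL hab hbc hcd => ?_⟩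
  have hN' : (N : ℝ) ≠ 0 := Nat.cast_ne_zero.2 hN.ne'
  have hs : 0 < h' * L ^ p / N := by positivity
  obtain rfl : b = a + N * (h' * L ^ p / N) := by field_simp; linarith
  obtain rfl : c = a + (h' + g') * L ^ p := by field_simp at hbc; linarith
  obtain rfl : d = a + (h' + g') * L ^ p + N * (h' * L ^ p / N) := by field_simp; linarith
  obtain ⟨⟨k, i⟩, hi⟩ := exists_setLAverage_le_subbox w hM hN x hL a hs
  obtain ⟨⟨k', j⟩, hj⟩ := exists_setLAverage_le_subbox (fun z => w z ^ (1 / (1 - q))) hM hN x hL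
    (a + (h' + g') * L ^ p) hs
  exact (mul_le_mul' hi (rpow_le_rpow hj (by linarith))).trans
    (hC.aqProd_subbox_le hCtop hp hq hw hh.le hg hh' hM hN hgap hsmall x hL a k k' i j)

theorem memAqLag_iff (hp : 1 < p) (hq : 1 < q) (hw : IsWeight n w) (hh : 0 < h) (hg : 0 < g)
    {h' g' : ℝ} (hh' : 0 < h') (hg' : 0 < g') : MemAqLag n p q h g w ↔ MemAqLag n p q h' g' w :=
  ⟨fun ⟨_, hCtop, hC⟩ => hC.memAqLag hCtop hp hq hw hh hg hh' hg',
    fun ⟨_, hCtop, hC⟩ => hC.memAqLag hCtop hp hq hw hh' hg' hh hg⟩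

theorem isAqPlusConst_iff_isAqLagConst {γ : ℝ} :
    IsAqPlusConst n p q γ w C ↔ IsAqLagConst n p q (1 - γ) (2 * γ) w C := by
  refine ⟨fun hC x L a b c d hL hab hbc hcd => ?_, fun hC x t L hL =>
    hC x L _ _ _ _ hL (by ring) (by ring) (by ring)⟩
  obtain ⟨t, rfl⟩ : ∃ t, a = t - L ^ p := ⟨a + L ^ p, by ring⟩
  obtain rfl : b = t - γ * L ^ p := by linarith
  obtain rfl : c = t + γ * L ^ p := by linarith
  obtain rfl : d = t + L ^ p := by linarith
  exact hC x t L hL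

theorem memAqPlus_iff_memAqLag {γ : ℝ} :
    MemAqPlus n p q γ w ↔ MemAqLag n p q (1 - γ) (2 * γ) w :=
  exists_congr fun _ => and_congr_right fun _ => isAqPlusConst_iff_isAqLagConst

theorem forall_tAdd_pRectPlus_le_iff_isAqLagConst {α τ : ℝ} :
    (∀ (x : Fin n → ℝ) (t L : ℝ), 0 < L →
        (⨍⁻ z in tAdd n (pRectPlus n p x t L α) (-(τ * (1 + α) * L ^ p)), w z ∂volume) *
          (⨍⁻ z in pRectPlus n p x t L α, w z ^ (1 / (1 - q)) ∂volume) ^ (q - 1) ≤ C) ↔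
      IsAqLagConst n p q (1 - α) (τ * (1 + α) - (1 - α)) w C := by
  simp only [pRectPlus_eq_spaceTimeBox, tAdd_spaceTimeBox]
  refine ⟨fun hC x L a b c d hL hab hbc hcd => ?_, fun hC x t L hL =>
    hC x L _ _ _ _ hL (by ring) (by ring) (by ring)⟩
  obtain ⟨t, rfl⟩ : ∃ t, c = t + α * L ^ p := ⟨c - α * L ^ p, by ring⟩
  obtain rfl : d = t + L ^ p := by linarith
  obtain rfl : b = t + L ^ p + -(τ * (1 + α) * L ^ p) := by linarith
  obtain rfl : a = t + α * L ^ p + -(τ * (1 + α) * L ^ p) := by linarith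
  exact hC x t L hL

end LagChange

theorem statement3_general (n : ℕ) (p : ℝ) (hp : 1 < p) (q : ℝ) (hq : 1 < q)
    (γ α τ : ℝ) (hγ : 0 < γ) (hγα : γ ≤ α) (hα : α < 1) (hτ : 1 ≤ τ)
    (w : (Fin n → ℝ) × ℝ → ℝ≥0∞) (hw : IsWeight n w) :
    (MemAqPlus n p q γ w ↔
      ∃ C : ℝ≥0∞, C ≠ ⊤ ∧ ∀ (x : Fin n → ℝ) (t L : ℝ), 0 < L →
        (⨍⁻ z in tAdd n (pRectPlus n p x t L α) (-(τ * (1 + α) * L ^ p)), w z ∂volume) *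
          (⨍⁻ z in pRectPlus n p x t L α, w z ^ (1 / (1 - q)) ∂volume) ^ (q - 1) ≤ C) ∧
    ∀ γ' : ℝ, 0 < γ' → γ' < 1 → (MemAqPlus n p q γ w ↔ MemAqPlus n p q γ' w) := by
  have hα₀ : 0 < α := hγ.trans_le hγα
  have hlag : 0 < τ * (1 + α) - (1 - α) := by nlinarith
  refine ⟨?_, fun γ' hγ'₀ hγ'₁ => ?_⟩
  · simp only [forall_tAdd_pRectPlus_le_iff_isAqLagConst]
    rw [memAqPlus_iff_memAqLag]
    exact memAqLag_iff hp hq hw (by linarith) (by linarith) (by linarith) hlag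
  · rw [memAqPlus_iff_memAqLag, memAqPlus_iff_memAqLag]
    exact memAqLag_iff hp hq hw (by linarith) (by linarith) (by linarith) (by linarith)

/-- Let `0 < γ ≤ α < 1`, `1 < q < ∞`, `τ ≥ 1`. Then `w ∈ A_q^+(γ)`
iff there is a constant `C` such that
`(⨍_{S^-(α)} w)·(⨍_{R^+(α)} w^{1/(1-q)})^{q-1} ≤ C` for every parabolic rectangle `R`,
where `S^-(α) = R^+(α) - (0, τ(1+α)L^p)`. In particular the definition of `A_q^+(γ)`
is independent of the choice of `0 < γ < 1`. -/
theorem statement3 (n : ℕ) (hn : 1 ≤ n) (p : ℝ) (hp : 1 < p) (q : ℝ) (hq : 1 < q)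
    (γ α τ : ℝ) (hγ : 0 < γ) (hγα : γ ≤ α) (hα : α < 1) (hτ : 1 ≤ τ)
    (w : (Fin n → ℝ) × ℝ → ℝ≥0∞) (hw : IsWeight n w) :
    (MemAqPlus n p q γ w ↔
      ∃ C : ℝ≥0∞, C ≠ ⊤ ∧ ∀ (x : Fin n → ℝ) (t L : ℝ), 0 < L →
        (⨍⁻ z in tAdd n (pRectPlus n p x t L α) (-(τ * (1 + α) * L ^ p)), w z ∂volume) *
          (⨍⁻ z in pRectPlus n p x t L α, w z ^ (1 / (1 - q)) ∂volume) ^ (q - 1) ≤ C) ∧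
    ∀ γ' : ℝ, 0 < γ' → γ' < 1 → (MemAqPlus n p q γ w ↔ MemAqPlus n p q γ' w) :=
  statement3_general n p hp q hq γ α τ hγ hγα hα hτ w hw
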